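/- arXiv:1009.4406 — 2 statements merged into one kernel-verified Lean document; each statement's English description precedes it below -/
import Mathlib

section
/- Let A be an n×n complex matrix and let z₁, …, z_l, ẑ_{l+1}, …, ẑ_n be a basis of ℂⁿ such that A z_i = λ_i z_i for i = 1, …, l, with λ_i ≠ 0 for i = 1, …, k (where k ≤ l). Let b, x₀ ∈ ℂⁿ, r₀ = b − A x₀, and write r₀ = Σ_{i=1}^{l} β_i z_i + Σ_{i=l+1}^{n} β_i ẑ_i. Fix a ≥ 0 and a polynomial p, and choose α_i = (β_i λ_i^a − λ_i^{a+1} p(λ_i) β_i) / λ_i^{a+1} for i = 1, …, k. Then for x_m = x₀ + Σ_{i=1}^{k} α_i z_i + p(A) r₀ and r_m = b − A x_m, one has A^a r_m = Σ_{i=k+1}^{l} (β_i λ_i^a − λ_i^{a+1} p(λ_i) β_i) z_i + Σ_{i=l+1}^{n} β_i (A^a − A^{a+1} p(A)) ẑ_i; that is, the components along the augmented eigenvectors z₁, …, z_k are annihilated. -/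
lemma mulVec_finsum {n : ℕ} (M : Matrix (Fin n) (Fin n) ℂ) (s : Finset (Fin n))
    (v : Fin n → (Fin n → ℂ)) :
    M.mulVec (∑ i ∈ s, v i) = ∑ i ∈ s, M.mulVec (v i) := by
  simpa only [Matrix.mulVecLin_apply] using map_sum M.mulVecLin v s

lemma pow_mulVec_eig {n : ℕ} (A : Matrix (Fin n) (Fin n) ℂ) (v : Fin n → ℂ) (μ : ℂ)
    (h : A.mulVec v = μ • v) (m : ℕ) : (A ^ m).mulVec v = μ ^ m • v := by
  induction m with
  | zero => simp [Matrix.one_mulVec]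
  | succ m ih =>
    rw [pow_succ, ← Matrix.mulVec_mulVec, h, Matrix.mulVec_smul, ih, smul_smul, pow_succ]
    ring_nf

lemma aeval_mulVec_eig {n : ℕ} (A : Matrix (Fin n) (Fin n) ℂ) (v : Fin n → ℂ) (μ : ℂ)
    (h : A.mulVec v = μ • v) (q : Polynomial ℂ) :
    (Polynomial.aeval A q).mulVec v = q.eval μ • v := by
  induction q using Polynomial.induction_on' with
  | add f g hf hg =>
    rw [map_add, Matrix.add_mulVec, hf, hg, Polynomial.eval_add, add_smul]
  | monomial m c =>
    rw [Polynomial.aeval_monomial, Polynomial.eval_monomial,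
      Algebra.algebraMap_eq_smul_one, smul_mul_assoc, one_mul,
      Matrix.smul_mulVec, pow_mulVec_eig A v μ h m, smul_smul]


/-- choosing `αᵢ = (βᵢ λᵢ^a - λᵢ^{a+1} p(λᵢ) βᵢ) / λᵢ^{a+1}` for the augmented
eigen-directions (`λᵢ ≠ 0`, `i ≤ k`) annihilates their components in `A^a r_m`:
`A^a r_m = ∑_{k<i≤l} (βᵢ λᵢ^a - λᵢ^{a+1} p(λᵢ) βᵢ) zᵢ + ∑_{i>l} βᵢ (A^a - A^{a+1} p(A)) ẑᵢ`. -/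
theorem augmented_residual_annihilates_eigencomponents
    (n l k : ℕ) (hl : l ≤ n) (hk : k ≤ l) (A : Matrix (Fin n) (Fin n) ℂ)
    (z : Fin n → (Fin n → ℂ))
    (hindep : LinearIndependent ℂ z)
    (hspan : Submodule.span ℂ (Set.range z) = ⊤)
    (lam : Fin n → ℂ)
    (heig : ∀ i : Fin n, (i : ℕ) < l → A.mulVec (z i) = lam i • z i)
    (hlam : ∀ i : Fin n, (i : ℕ) < k → lam i ≠ 0)
    (b x₀ r₀ : Fin n → ℂ) (hr₀ : r₀ = b - A.mulVec x₀)
    (β : Fin n → ℂ)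
    (hβ : r₀ = ∑ i ∈ Finset.univ.filter (fun i : Fin n => (i : ℕ) < l), β i • z i
             + ∑ i ∈ Finset.univ.filter (fun i : Fin n => l ≤ (i : ℕ)), β i • z i)
    (a : ℕ) (p : Polynomial ℂ) (α : Fin n → ℂ)
    (hα : ∀ i : Fin n, (i : ℕ) < k →
        α i = (β i * lam i ^ a - lam i ^ (a + 1) * p.eval (lam i) * β i) / lam i ^ (a + 1))
    (xm rm : Fin n → ℂ)
    (hxm : xm = x₀ + ∑ i ∈ Finset.univ.filter (fun i : Fin n => (i : ℕ) < k), α i • z i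
              + (Polynomial.aeval A p).mulVec r₀)
    (hrm : rm = b - A.mulVec xm) :
    (A ^ a).mulVec rm
      = ∑ i ∈ Finset.univ.filter (fun i : Fin n => k ≤ (i : ℕ) ∧ (i : ℕ) < l),
          (β i * lam i ^ a - lam i ^ (a + 1) * p.eval (lam i) * β i) • z i
      + ∑ i ∈ Finset.univ.filter (fun i : Fin n => l ≤ (i : ℕ)),
          β i • ((A ^ a - A ^ (a + 1) * Polynomial.aeval A p).mulVec (z i)) := by
  set Sk := Finset.univ.filter (fun i : Fin n => (i : ℕ) < k) with hSk
  set Sl := Finset.univ.filter (fun i : Fin n => (i : ℕ) < l) with hSl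
  set Sm := Finset.univ.filter (fun i : Fin n => k ≤ (i : ℕ) ∧ (i : ℕ) < l) with hSm
  set St := Finset.univ.filter (fun i : Fin n => l ≤ (i : ℕ)) with hSt
  set P := Polynomial.aeval A p with hP
  -- rm in terms of r₀
  have hrm' : rm = r₀ - A.mulVec (∑ i ∈ Sk, α i • z i) - A.mulVec (P.mulVec r₀) := by
    rw [hrm, hxm, Matrix.mulVec_add, Matrix.mulVec_add, hr₀]
    abel
  -- split the l-sum
  have hsplit : ∀ g : Fin n → (Fin n → ℂ), ∑ i ∈ Sl, g i = ∑ i ∈ Sk, g i + ∑ i ∈ Sm, g i := by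
    intro g
    rw [← Finset.sum_filter_add_sum_filter_not Sl (fun i : Fin n => (i : ℕ) < k)]
    congr 1
    · congr 1
      rw [hSl, hSk, Finset.filter_filter]
      apply Finset.filter_congr
      intro i _
      simp only [and_iff_right_iff_imp]
      exact fun h => lt_of_lt_of_le h hk
    · congr 1
      rw [hSl, hSm, Finset.filter_filter]
      apply Finset.filter_congr
      intro i _
      simp only [not_lt]
      tauto
  -- main computation
  rw [hrm', Matrix.mulVec_sub, Matrix.mulVec_sub]
  have hpow1 : ∀ w : Fin n → ℂ, (A ^ a).mulVec (A.mulVec w) = (A ^ (a + 1)).mulVec w := by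
    intro w; rw [Matrix.mulVec_mulVec, ← pow_succ]
  rw [hpow1, hpow1, Matrix.mulVec_mulVec]
  -- T2
  have hT2 : (A ^ (a + 1)).mulVec (∑ i ∈ Sk, α i • z i)
      = ∑ i ∈ Sk, (β i * lam i ^ a - lam i ^ (a + 1) * p.eval (lam i) * β i) • z i := by
    rw [mulVec_finsum]
    apply Finset.sum_congr rfl
    intro i hi
    have hik : (i : ℕ) < k := by simpa [hSk] using hi
    have hil : (i : ℕ) < l := lt_of_lt_of_le hik hk
    rw [Matrix.mulVec_smul, pow_mulVec_eig A (z i) (lam i) (heig i hil), smul_smul,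
      hα i hik, div_mul_cancel₀ _ (pow_ne_zero _ (hlam i hik))]
  -- A^a r₀
  have hT1 : (A ^ a).mulVec r₀
      = ∑ i ∈ Sl, (β i * lam i ^ a) • z i + ∑ i ∈ St, β i • (A ^ a).mulVec (z i) := by
    rw [hβ, Matrix.mulVec_add, mulVec_finsum, mulVec_finsum]
    congr 1
    · apply Finset.sum_congr rfl
      intro i hi
      have hil : (i : ℕ) < l := by simpa [hSl] using hi
      rw [Matrix.mulVec_smul, pow_mulVec_eig A (z i) (lam i) (heig i hil), smul_smul]
    · apply Finset.sum_congr rfl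
      intro i _
      rw [Matrix.mulVec_smul]
  -- A^{a+1} P r₀
  have hT3 : (A ^ (a + 1) * P).mulVec r₀
      = ∑ i ∈ Sl, (lam i ^ (a + 1) * p.eval (lam i) * β i) • z i
        + ∑ i ∈ St, β i • (A ^ (a + 1) * P).mulVec (z i) := by
    rw [hβ, Matrix.mulVec_add, mulVec_finsum, mulVec_finsum]
    congr 1
    · apply Finset.sum_congr rfl
      intro i hi
      have hil : (i : ℕ) < l := by simpa [hSl] using hi
      rw [Matrix.mulVec_smul, ← Matrix.mulVec_mulVec, hP,
        aeval_mulVec_eig A (z i) (lam i) (heig i hil), Matrix.mulVec_smul,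
        pow_mulVec_eig A (z i) (lam i) (heig i hil), smul_smul, smul_smul]
      ring_nf
    · apply Finset.sum_congr rfl
      intro i _
      rw [Matrix.mulVec_smul]
  rw [hT1, hT2, hT3, hsplit (fun i => (β i * lam i ^ a) • z i),
    hsplit (fun i => (lam i ^ (a + 1) * p.eval (lam i) * β i) • z i)]
  have hlast : ∑ i ∈ St, β i • ((A ^ a - A ^ (a + 1) * P).mulVec (z i))
      = ∑ i ∈ St, β i • (A ^ a).mulVec (z i)
        - ∑ i ∈ St, β i • (A ^ (a + 1) * P).mulVec (z i) := by
    rw [← Finset.sum_sub_distrib]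
    apply Finset.sum_congr rfl
    intro i _
    rw [Matrix.sub_mulVec, smul_sub]
  have hmid : ∑ i ∈ Sm, (β i * lam i ^ a - lam i ^ (a + 1) * p.eval (lam i) * β i) • z i
      = ∑ i ∈ Sm, (β i * lam i ^ a) • z i - ∑ i ∈ Sm, (lam i ^ (a + 1) * p.eval (lam i) * β i) • z i := by
    rw [← Finset.sum_sub_distrib]
    apply Finset.sum_congr rfl
    intro i _
    rw [sub_smul]
  have hk0 : ∑ i ∈ Sk, (β i * lam i ^ a - lam i ^ (a + 1) * p.eval (lam i) * β i) • z i
      = ∑ i ∈ Sk, (β i * lam i ^ a) • z i - ∑ i ∈ Sk, (lam i ^ (a + 1) * p.eval (lam i) * β i) • z i := by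
    rw [← Finset.sum_sub_distrib]
    apply Finset.sum_congr rfl
    intro i _
    rw [sub_smul]
  rw [hlast, hmid, hk0]
  abel
end

section
/- Let A be an n×n complex matrix and let z₁, …, z_l, ẑ_{l+1}, …, ẑ_n be a basis of ℂⁿ such that A z_i = λ_i z_i with λ_i ≠ 0 for i = 1, …, l. Let b, x₀ ∈ ℂⁿ, r₀ = b − A x₀, and write r₀ = Σ_{i=1}^{l} β_i z_i + Σ_{i=l+1}^{n} β_i ẑ_i. Fix a ≥ 0, m > a, k ≤ l, and let K_{m,k} = span{A^a r₀, A^{a+1} r₀, …, A^{m−1} r₀, z₁, …, z_k}. Then for every choice of coefficients c₁, …, c_{m−a} ∈ ℂ, with p(λ) = Σ_{i=1}^{m−a} c_i λ^{a+i−1}, the ADGMRES iterate x_m minimizing ‖A^a (b − A x)‖ over x ∈ x₀ + K_{m,k} satisfies ‖A^a (b − A x_m)‖ ≤ ‖Σ_{i=k+1}^{l} β_i (λ_i^a − λ_i^{a+1} p(λ_i)) z_i + Σ_{i=l+1}^{n} β_i (A^a − A^{a+1} p(A)) ẑ_i‖; that is, the ADGMRES residual is controlled by polynomial approximation on the spectrum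 with the augmented eigenvalues λ₁, …, λ_k removed. -/
theorem mySum_mulVec (n : ℕ) {ι : Type*} (s : Finset ι) (M : ι → Matrix (Fin n) (Fin n) ℂ)
    (v : Fin n → ℂ) : (∑ i ∈ s, M i).mulVec v = ∑ i ∈ s, (M i).mulVec v := by
  induction s using Finset.cons_induction with
  | empty => simp
  | cons i s hi ih => rw [Finset.sum_cons, Finset.sum_cons, Matrix.add_mulVec, ih]

theorem myMulVec_sum (n : ℕ) {ι : Type*} (s : Finset ι) (A : Matrix (Fin n) (Fin n) ℂ)
    (w : ι → Fin n → ℂ) : A.mulVec (∑ i ∈ s, w i) = ∑ i ∈ s, A.mulVec (w i) :=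
  map_sum (Matrix.mulVecLin A) w s

theorem myPow_eig (n : ℕ) (A : Matrix (Fin n) (Fin n) ℂ) (v : Fin n → ℂ) (μ : ℂ)
    (h : A.mulVec v = μ • v) (s : ℕ) : (A ^ s).mulVec v = μ ^ s • v := by
  induction s with
  | zero => simp
  | succ s ih =>
      rw [pow_succ, ← Matrix.mulVec_mulVec, h, Matrix.mulVec_smul, ih, smul_smul, pow_succ]
      ring_nf

theorem myaeval_eig (n : ℕ) (A : Matrix (Fin n) (Fin n) ℂ) (v : Fin n → ℂ) (μ : ℂ)
    (h : A.mulVec v = μ • v) (q : Polynomial ℂ) :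
    (Polynomial.aeval A q).mulVec v = q.eval μ • v := by
  induction q using Polynomial.induction_on' with
  | add p q hpq hq => simp [Matrix.add_mulVec, hpq, hq, add_smul]
  | monomial q c =>
    rw [Polynomial.aeval_monomial, Polynomial.eval_monomial,
      show (algebraMap ℂ (Matrix (Fin n) (Fin n) ℂ)) c * A ^ q = c • A ^ q from
        (Algebra.smul_def c (A ^ q)).symm,
      Matrix.smul_mulVec, myPow_eig n A v μ h, smul_smul]

/-- the ADGMRES residual, minimized over the augmented Krylov space
`K_{m,k} = span{A^a r₀, …, A^{m-1} r₀, z₁, …, z_k}`, is bounded for every polynomial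
`p(λ) = ∑_{i=1}^{m-a} cᵢ λ^{a+i-1}` by
`‖∑_{k<i≤l} βᵢ (λᵢ^a - λᵢ^{a+1} p(λᵢ)) zᵢ + ∑_{i>l} βᵢ (A^a - A^{a+1} p(A)) ẑᵢ‖`. -/
theorem adgmres_residual_bound
    (n l k : ℕ) (hl : l ≤ n) (hk : k ≤ l)
    (A : Matrix (Fin n) (Fin n) ℂ)
    (z : Fin n → (Fin n → ℂ))
    (hindep : LinearIndependent ℂ z)
    (hspan : Submodule.span ℂ (Set.range z) = ⊤)
    (lam : Fin n → ℂ)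
    (heig : ∀ i : Fin n, (i : ℕ) < l → A.mulVec (z i) = lam i • z i)
    (hlam : ∀ i : Fin n, (i : ℕ) < l → lam i ≠ 0)
    (b x₀ r₀ : Fin n → ℂ) (hr₀ : r₀ = b - A.mulVec x₀)
    (β : Fin n → ℂ)
    (hβ : r₀ = ∑ i ∈ Finset.univ.filter (fun i : Fin n => (i : ℕ) < l), β i • z i
             + ∑ i ∈ Finset.univ.filter (fun i : Fin n => l ≤ (i : ℕ)), β i • z i)
    (a m : ℕ) (ham : a < m)
    (Kmk : Submodule ℂ (Fin n → ℂ))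
    (hKmk : Kmk = Submodule.span ℂ
        ((Set.range fun i : Fin (m - a) => (A ^ (a + (i : ℕ))).mulVec r₀)
          ∪ (z '' {i : Fin n | (i : ℕ) < k})))
    (xm : Fin n → ℂ)
    (hxm_mem : xm - x₀ ∈ Kmk)
    (hxm_min : ∀ x : Fin n → ℂ, x - x₀ ∈ Kmk →
      ‖(WithLp.equiv 2 (Fin n → ℂ)).symm ((A ^ a).mulVec (b - A.mulVec xm))‖
        ≤ ‖(WithLp.equiv 2 (Fin n → ℂ)).symm ((A ^ a).mulVec (b - A.mulVec x))‖) :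
    ∀ (c : Fin (m - a) → ℂ) (p : Polynomial ℂ),
      p = ∑ i : Fin (m - a), Polynomial.C (c i) * Polynomial.X ^ (a + (i : ℕ)) →
      ‖(WithLp.equiv 2 (Fin n → ℂ)).symm ((A ^ a).mulVec (b - A.mulVec xm))‖
        ≤ ‖(WithLp.equiv 2 (Fin n → ℂ)).symm
            (∑ i ∈ Finset.univ.filter (fun i : Fin n => k ≤ (i : ℕ) ∧ (i : ℕ) < l),
                (β i * (lam i ^ a - lam i ^ (a + 1) * p.eval (lam i))) • z i
             + ∑ i ∈ Finset.univ.filter (fun i : Fin n => l ≤ (i : ℕ)),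
                β i • ((A ^ a - A ^ (a + 1) * Polynomial.aeval A p).mulVec (z i)))‖ := by
  intro c p hp
  set q : Polynomial ℂ := Polynomial.X ^ a - Polynomial.X ^ (a + 1) * p with hq
  have hqa : Polynomial.aeval A q = A ^ a - A ^ (a + 1) * Polynomial.aeval A p := by
    simp [hq]
  have hqe : ∀ μ : ℂ, q.eval μ = μ ^ a - μ ^ (a + 1) * p.eval μ := by
    intro μ; simp [hq]
  set y : Fin n → ℂ :=
    ∑ i ∈ Finset.univ.filter (fun i : Fin n => (i : ℕ) < k),
      ((β i * q.eval (lam i)) / lam i ^ (a + 1)) • z i with hy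
  set w : Fin n → ℂ := (Polynomial.aeval A p).mulVec r₀ + y with hw
  -- membership of the candidate
  have hmem : (x₀ + w) - x₀ ∈ Kmk := by
    rw [add_sub_cancel_left, hKmk, hw]
    apply Submodule.add_mem
    · have h1 : (Polynomial.aeval A p).mulVec r₀
          = ∑ i : Fin (m - a), (c i) • ((A ^ (a + (i : ℕ))).mulVec r₀) := by
        rw [hp, map_sum, mySum_mulVec]
        refine Finset.sum_congr rfl fun i _ => ?_
        rw [map_mul, Polynomial.aeval_C, map_pow, Polynomial.aeval_X,
          show (algebraMap ℂ (Matrix (Fin n) (Fin n) ℂ)) (c i) * A ^ (a + (i : ℕ))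
              = (c i) • A ^ (a + (i : ℕ)) from (Algebra.smul_def _ _).symm,
          Matrix.smul_mulVec]
      rw [h1]
      exact Submodule.sum_mem _ fun i _ => Submodule.smul_mem _ _
        (Submodule.subset_span (Set.mem_union_left _ ⟨i, rfl⟩))
    · exact Submodule.sum_mem _ fun i hi => Submodule.smul_mem _ _
        (Submodule.subset_span (Set.mem_union_right _
          ⟨i, by simpa using (Finset.mem_filter.mp hi).2, rfl⟩))
  -- the key residual identity
  have hb : b - A.mulVec (x₀ + w) = r₀ - A.mulVec w := by
    rw [hr₀, Matrix.mulVec_add]; abel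
  have e1 : (A ^ (a + 1)).mulVec y
      = ∑ i ∈ Finset.univ.filter (fun i : Fin n => (i : ℕ) < k),
          (β i * (lam i ^ a - lam i ^ (a + 1) * p.eval (lam i))) • z i := by
    rw [hy, myMulVec_sum]
    refine Finset.sum_congr rfl fun i hi => ?_
    have hik : (i : ℕ) < k := by simpa using (Finset.mem_filter.mp hi).2
    have hil : (i : ℕ) < l := lt_of_lt_of_le hik hk
    rw [Matrix.mulVec_smul, myPow_eig n A (z i) (lam i) (heig i hil), smul_smul,
      div_mul_cancel₀ _ (pow_ne_zero _ (hlam i hil)), hqe]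
  have e2 : (Polynomial.aeval A q).mulVec r₀
      = (∑ i ∈ Finset.univ.filter (fun i : Fin n => (i : ℕ) < l),
          (β i * (lam i ^ a - lam i ^ (a + 1) * p.eval (lam i))) • z i)
        + ∑ i ∈ Finset.univ.filter (fun i : Fin n => l ≤ (i : ℕ)),
            β i • ((A ^ a - A ^ (a + 1) * Polynomial.aeval A p).mulVec (z i)) := by
    rw [hβ, Matrix.mulVec_add, myMulVec_sum, myMulVec_sum]
    congr 1
    · refine Finset.sum_congr rfl fun i hi => ?_
      have hil : (i : ℕ) < l := by simpa using (Finset.mem_filter.mp hi).2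
      rw [Matrix.mulVec_smul, myaeval_eig n A (z i) (lam i) (heig i hil), hqe, smul_smul]
    · refine Finset.sum_congr rfl fun i hi => ?_
      rw [Matrix.mulVec_smul, hqa]
  have esplit : (∑ i ∈ Finset.univ.filter (fun i : Fin n => (i : ℕ) < l),
          (β i * (lam i ^ a - lam i ^ (a + 1) * p.eval (lam i))) • z i)
      = (∑ i ∈ Finset.univ.filter (fun i : Fin n => (i : ℕ) < k),
          (β i * (lam i ^ a - lam i ^ (a + 1) * p.eval (lam i))) • z i)
        + ∑ i ∈ Finset.univ.filter (fun i : Fin n => k ≤ (i : ℕ) ∧ (i : ℕ) < l),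
          (β i * (lam i ^ a - lam i ^ (a + 1) * p.eval (lam i))) • z i := by
    have h := Finset.sum_filter_add_sum_filter_not
      (Finset.univ.filter (fun i : Fin n => (i : ℕ) < l)) (fun i : Fin n => (i : ℕ) < k)
      (fun i => (β i * (lam i ^ a - lam i ^ (a + 1) * p.eval (lam i))) • z i)
    rw [Finset.filter_filter, Finset.filter_filter] at h
    have hf1 : (Finset.univ.filter fun i : Fin n => (i : ℕ) < l ∧ (i : ℕ) < k)
        = Finset.univ.filter (fun i : Fin n => (i : ℕ) < k) := by
      ext i; simp; omega
    have hf2 : (Finset.univ.filter fun i : Fin n => (i : ℕ) < l ∧ ¬(i : ℕ) < k)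
        = Finset.univ.filter (fun i : Fin n => k ≤ (i : ℕ) ∧ (i : ℕ) < l) := by
      ext i; simp; omega
    rw [hf1, hf2] at h
    rw [← h]
  have key : (A ^ a).mulVec (b - A.mulVec (x₀ + w))
      = ∑ i ∈ Finset.univ.filter (fun i : Fin n => k ≤ (i : ℕ) ∧ (i : ℕ) < l),
            (β i * (lam i ^ a - lam i ^ (a + 1) * p.eval (lam i))) • z i
        + ∑ i ∈ Finset.univ.filter (fun i : Fin n => l ≤ (i : ℕ)),
            β i • ((A ^ a - A ^ (a + 1) * Polynomial.aeval A p).mulVec (z i)) := by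
    have step : (A ^ a).mulVec (b - A.mulVec (x₀ + w))
        = (Polynomial.aeval A q).mulVec r₀ - (A ^ (a + 1)).mulVec y := by
      rw [hb, Matrix.mulVec_sub, Matrix.mulVec_mulVec, ← pow_succ, hw, Matrix.mulVec_add,
        Matrix.mulVec_mulVec, hqa, Matrix.sub_mulVec]
      abel
    rw [step, e2, esplit, e1]
    abel
  calc ‖(WithLp.equiv 2 (Fin n → ℂ)).symm ((A ^ a).mulVec (b - A.mulVec xm))‖
      ≤ ‖(WithLp.equiv 2 (Fin n → ℂ)).symm ((A ^ a).mulVec (b - A.mulVec (x₀ + w)))‖ :=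
        hxm_min _ hmem
    _ = _ := by rw [key]
end
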